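/- The set 𝓜 = {M_ε : ε ∈ {0,1}^ℕ} satisfies 𝓜 = ∩_{n=0}^∞ ∪_{ω∈{0,1}^n} I_ω, where I_ω = [M_{ω1̄}, M_{ω0̄}]. -/

import Mathlib

open MeasureTheory Filter Topology

/-- The limiting cumulative distribution function `F_ε(z)` of the approximation
coefficients, for a generalised α-Lüroth expansion determined by the sequence
`t` (1-indexed, `t 1 = 1`) and the sign sequence `ε` (0-indexed: `ε n` is the
paper's `ε_{n+1}`).  Here `a_n = t n - t (n+1)` and the `n`-th summand is
`a_n` if `a_n / t_{n+1-ε_n} < z` and `t_{n+1-ε_n}·z` otherwise. -/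
noncomputable def F (t : ℕ → ℝ) (ε : ℕ → Fin 2) (z : ℝ) : ℝ :=
  ∑' n : ℕ,
    if (t (n + 1) - t (n + 2)) / t (n + 2 - (ε n : ℕ)) < z
    then t (n + 1) - t (n + 2)
    else t (n + 2 - (ε n : ℕ)) * z

/-- The expected average value `M_ε = ∫_[0,1] (1 - F_ε) dλ`. -/
noncomputable def Mavg (t : ℕ → ℝ) (ε : ℕ → Fin 2) : ℝ :=
  ∫ z in Set.Icc (0 : ℝ) 1, (1 - F t ε z)

/-- `t` generates an α-Lüroth partition: `(t_n)_{n ≥ 1}` is a strictly decreasing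
sequence in `(0,1]` with `t 1 = 1` tending to `0`. -/
structure IsLurothSeq (t : ℕ → ℝ) : Prop where
  t_one : t 1 = 1
  pos : ∀ n, 1 ≤ n → 0 < t n
  anti : ∀ n, 1 ≤ n → t (n + 1) < t n
  tendsto_zero : Tendsto t atTop (nhds 0)

/-- Concatenation `ωε` of a finite word `ω ∈ {0,1}^n` with a sequence `ε ∈ {0,1}^ℕ`. -/
def cat {n : ℕ} (w : Fin n → Fin 2) (ε : ℕ → Fin 2) : ℕ → Fin 2 :=
  fun k => if h : k < n then w ⟨k, h⟩ else ε (k - n)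

/-- The interval `I_ω = [M_{ω1̄}, M_{ω0̄}]`. -/
noncomputable def Iword (t : ℕ → ℝ) {n : ℕ} (w : Fin n → Fin 2) : Set ℝ :=
  Set.Icc (Mavg t (cat w fun _ => 1)) (Mavg t (cat w fun _ => 0))

/-- The set `𝓜 = {M_ε : ε ∈ {0,1}^ℕ}`. -/
noncomputable def calM (t : ℕ → ℝ) : Set ℝ :=
  Set.range (Mavg t)

/-- The quantity `g(k) = ∫_[0,1] (f_k^1 - f_k^0) dλ`. -/
noncomputable def gseq (t : ℕ → ℝ) (k : ℕ) : ℝ :=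
  if t (k + 1) / t k ≤ 1 / 2 then
    t k / 2 - t (k + 1) / 2 - (t (k + 1)) ^ 2 / (2 * t k)
  else
    (t k) ^ 2 / (2 * t (k + 1)) - (t (k + 1)) ^ 2 / (2 * t k)
      + 3 * t (k + 1) / 2 - 3 * t k / 2

/-- The gap/overlap function `G(n) = g(n+1) - Σ_{k ≥ n+2} g(k)`. -/
noncomputable def Gseq (t : ℕ → ℝ) (n : ℕ) : ℝ :=
  gseq t (n + 1) - ∑' k : ℕ, gseq t (n + 2 + k)

/-- The common length `I(n)` of the intervals `I_ω` for `ω ∈ {0,1}^n`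
(computed from the all-zeros word `ω = 0^n`). -/
noncomputable def Ilen (t : ℕ → ℝ) (n : ℕ) : ℝ :=
  Mavg t (fun _ => 0) - Mavg t (fun k => if k < n then 0 else 1)

/-- A Cantor set in `ℝ`: a nonempty compact set with empty interior and
no isolated points. -/
def IsCantorSet (S : Set ℝ) : Prop :=
  S.Nonempty ∧ IsCompact S ∧ interior S = ∅ ∧ ∀ x ∈ S, AccPt x (Filter.principal S)

section MyAux

open Set

variable {t : ℕ → ℝ}

lemma my_t_antitone (ht : IsLurothSeq t) : ∀ {k m : ℕ}, 1 ≤ k → k ≤ m → t m ≤ t k := by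
  intro k m hk hkm
  induction m with
  | zero => omega
  | succ m ih =>
    rcases eq_or_lt_of_le hkm with rfl | h
    · exact le_rfl
    · exact le_trans (le_of_lt (ht.anti m (by omega))) (ih (by omega))

lemma my_hasSum_tail (ht : IsLurothSeq t) (n : ℕ) :
    HasSum (fun k => t (n + 1 + k) - t (n + 2 + k)) (t (n + 1)) := by
  have hnn : ∀ k, 0 ≤ t (n + 1 + k) - t (n + 2 + k) := by
    intro k
    have h2 : n + 2 + k = (n + 1 + k) + 1 := by omega
    rw [h2]
    linarith [ht.anti (n + 1 + k) (by omega)]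
  have htel : ∀ N, ∑ k ∈ Finset.range N, (t (n + 1 + k) - t (n + 2 + k))
      = t (n + 1) - t (n + 1 + N) := by
    intro N
    have h := Finset.sum_range_sub' (fun k => t (n + 1 + k)) N
    simp only [Nat.add_zero] at h
    rw [← h]
    refine Finset.sum_congr rfl fun k _ => ?_
    congr 2
    omega
  have hsummable : Summable (fun k => t (n + 1 + k) - t (n + 2 + k)) := by
    apply summable_of_sum_range_le hnn (c := t (n + 1))
    intro N
    rw [htel]
    have : 0 ≤ t (n + 1 + N) := le_of_lt (ht.pos _ (by omega))
    linarith
  rw [hsummable.hasSum_iff_tendsto_nat]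
  have h0 : Tendsto (fun N => t (n + 1 + N)) atTop (nhds 0) :=
    ht.tendsto_zero.comp (tendsto_atTop_mono (fun N => Nat.le_add_left N (n + 1)) tendsto_id)
  simpa [htel] using (tendsto_const_nhds.sub h0)

lemma my_summable_a (ht : IsLurothSeq t) : Summable (fun n => t (n + 1) - t (n + 2)) := by
  refine (my_hasSum_tail ht 0).summable.congr fun k => ?_
  have h1 : 0 + 1 + k = k + 1 := by omega
  have h2 : 0 + 2 + k = k + 2 := by omega
  rw [h1, h2]

lemma my_a_nonneg (ht : IsLurothSeq t) (n : ℕ) : 0 ≤ t (n + 1) - t (n + 2) := by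
  linarith [ht.anti (n + 1) (by omega)]

lemma my_s_pos (ht : IsLurothSeq t) (ε : ℕ → Fin 2) (n : ℕ) :
    0 < t (n + 2 - (ε n : ℕ)) :=
  ht.pos _ (by have := (ε n).isLt; omega)

lemma my_s_le (ht : IsLurothSeq t) (ε : ℕ → Fin 2) (n : ℕ) :
    t (n + 2 - (ε n : ℕ)) ≤ t (n + 1) :=
  my_t_antitone ht (by omega) (by have := (ε n).isLt; omega)

lemma my_s_ge (ht : IsLurothSeq t) (ε : ℕ → Fin 2) (n : ℕ) :
    t (n + 2) ≤ t (n + 2 - (ε n : ℕ)) :=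
  my_t_antitone ht (by have := (ε n).isLt; omega) (by omega)

lemma my_F_eq (ht : IsLurothSeq t) (ε : ℕ → Fin 2) (z : ℝ) :
    F t ε z = ∑' n, min (t (n + 1) - t (n + 2)) (t (n + 2 - (ε n : ℕ)) * z) := by
  unfold F
  refine tsum_congr fun n => ?_
  have hs := my_s_pos ht ε n
  split_ifs with h
  · rw [div_lt_iff₀ hs] at h
    exact (min_eq_left (by nlinarith)).symm
  · rw [not_lt, le_div_iff₀ hs] at h
    exact (min_eq_right (by nlinarith)).symm

lemma my_summable_min (ht : IsLurothSeq t) (ε : ℕ → Fin 2) {z : ℝ} (hz : 0 ≤ z) :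
    Summable (fun n => min (t (n + 1) - t (n + 2)) (t (n + 2 - (ε n : ℕ)) * z)) := by
  refine Summable.of_nonneg_of_le (fun n => ?_) (fun n => min_le_left _ _) (my_summable_a ht)
  exact le_min (my_a_nonneg ht n) (mul_nonneg (le_of_lt (my_s_pos ht ε n)) hz)

lemma my_F_nonneg (ht : IsLurothSeq t) (ε : ℕ → Fin 2) {z : ℝ} (hz : 0 ≤ z) :
    0 ≤ F t ε z := by
  rw [my_F_eq ht ε z]
  exact tsum_nonneg fun n =>
    le_min (my_a_nonneg ht n) (mul_nonneg (le_of_lt (my_s_pos ht ε n)) hz)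

lemma my_F_mono_eps (ht : IsLurothSeq t) {ε ε' : ℕ → Fin 2}
    (h : ∀ k, (ε k : ℕ) ≤ (ε' k : ℕ)) {z : ℝ} (hz : 0 ≤ z) :
    F t ε z ≤ F t ε' z := by
  rw [my_F_eq ht ε z, my_F_eq ht ε' z]
  refine Summable.tsum_le_tsum (fun n => ?_) (my_summable_min ht ε hz) (my_summable_min ht ε' hz)
  refine min_le_min le_rfl (mul_le_mul_of_nonneg_right ?_ hz)
  exact my_t_antitone ht (by have := (ε' n).isLt; omega) (by have := h n; omega)

lemma my_F_monoOn (ht : IsLurothSeq t) (ε : ℕ → Fin 2) :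
    MonotoneOn (F t ε) (Set.Icc (0:ℝ) 1) := by
  intro z hz z' hz' hzz
  rw [my_F_eq ht ε z, my_F_eq ht ε z']
  refine Summable.tsum_le_tsum (fun n => ?_) (my_summable_min ht ε hz.1) (my_summable_min ht ε hz'.1)
  exact min_le_min le_rfl (mul_le_mul_of_nonneg_left hzz (le_of_lt (my_s_pos ht ε n)))

lemma my_F_integrable (ht : IsLurothSeq t) (ε : ℕ → Fin 2) :
    MeasureTheory.IntegrableOn (F t ε) (Set.Icc (0:ℝ) 1) :=
  (my_F_monoOn ht ε).integrableOn_isCompact isCompact_Icc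

lemma my_one_sub_F_integrable (ht : IsLurothSeq t) (ε : ℕ → Fin 2) :
    MeasureTheory.IntegrableOn (fun z => 1 - F t ε z) (Set.Icc (0:ℝ) 1) :=
  ((MeasureTheory.integrableOn_const_iff).2 (Or.inr (by simp))).sub (my_F_integrable ht ε)

lemma my_Mavg_anti (ht : IsLurothSeq t) {ε ε' : ℕ → Fin 2}
    (h : ∀ k, (ε k : ℕ) ≤ (ε' k : ℕ)) : Mavg t ε' ≤ Mavg t ε := by
  unfold Mavg
  refine MeasureTheory.setIntegral_mono_on (my_one_sub_F_integrable ht ε')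
    (my_one_sub_F_integrable ht ε) measurableSet_Icc fun z hz => ?_
  have := my_F_mono_eps ht h hz.1
  linarith

lemma my_F_diff_le (ht : IsLurothSeq t) {ε ε' : ℕ → Fin 2} {n : ℕ}
    (hagree : ∀ k, k < n → ε k = ε' k) (h : ∀ k, (ε k : ℕ) ≤ (ε' k : ℕ))
    {z : ℝ} (hz0 : 0 ≤ z) (hz1 : z ≤ 1) :
    F t ε' z - F t ε z ≤ t (n + 1) := by
  have ht1 : 0 ≤ t (n + 1) := le_of_lt (ht.pos _ (by omega))
  rw [my_F_eq ht ε z, my_F_eq ht ε' z,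
    ← Summable.tsum_sub (my_summable_min ht ε' hz0) (my_summable_min ht ε hz0)]
  set e : ℕ → ℝ := fun k => if k < n then 0 else (t (k + 1) - t (k + 2)) * z with he
  have he_nonneg : ∀ k, 0 ≤ e k := by
    intro k
    simp only [he]
    split_ifs
    · exact le_rfl
    · exact mul_nonneg (my_a_nonneg ht k) hz0
  have he_le : ∀ k, e k ≤ (t (k + 1) - t (k + 2)) * z := by
    intro k
    simp only [he]
    split_ifs
    · exact mul_nonneg (my_a_nonneg ht k) hz0
    · exact le_rfl
  have he_summable : Summable e :=
    Summable.of_nonneg_of_le he_nonneg he_le ((my_summable_a ht).mul_right z)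
  have hterm : ∀ k, min (t (k + 1) - t (k + 2)) (t (k + 2 - (ε' k : ℕ)) * z)
      - min (t (k + 1) - t (k + 2)) (t (k + 2 - (ε k : ℕ)) * z) ≤ e k := by
    intro k
    by_cases hk : k < n
    · simp [he, hk, hagree k hk]
    · simp only [he, if_neg hk]
      have hb : t (k + 2 - (ε k : ℕ)) * z ≤ t (k + 2 - (ε' k : ℕ)) * z := by
        refine mul_le_mul_of_nonneg_right ?_ hz0
        exact my_t_antitone ht (by have := (ε' k).isLt; omega) (by have := h k; omega)
      have hdiff : t (k + 2 - (ε' k : ℕ)) * z - t (k + 2 - (ε k : ℕ)) * z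
          ≤ (t (k + 1) - t (k + 2)) * z := by
        have h1 := my_s_le ht ε' k
        have h2 := my_s_ge ht ε k
        nlinarith
      rcases le_total (t (k + 1) - t (k + 2)) (t (k + 2 - (ε k : ℕ)) * z) with hc | hc
      · have hml := min_le_left (t (k + 1) - t (k + 2)) (t (k + 2 - (ε' k : ℕ)) * z)
        rw [min_eq_left hc]
        have h0 : 0 ≤ (t (k + 1) - t (k + 2)) * z := mul_nonneg (my_a_nonneg ht k) hz0
        linarith
      · rw [min_eq_right hc]
        have hmr := min_le_right (t (k + 1) - t (k + 2)) (t (k + 2 - (ε' k : ℕ)) * z)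
        linarith
  have hsum_le : ∑' k, (min (t (k + 1) - t (k + 2)) (t (k + 2 - (ε' k : ℕ)) * z)
      - min (t (k + 1) - t (k + 2)) (t (k + 2 - (ε k : ℕ)) * z)) ≤ ∑' k, e k :=
    Summable.tsum_le_tsum hterm ((my_summable_min ht ε' hz0).sub (my_summable_min ht ε hz0))
      he_summable
  have htail : ∑' k, e (k + n) = t (n + 1) * z := by
    have h1 : HasSum (fun k => e (k + n)) (t (n + 1) * z) := by
      refine HasSum.congr_fun ((my_hasSum_tail ht n).mul_right z) fun k => ?_
      simp only [he, if_neg (by omega : ¬ k + n < n)]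
      have h1 : n + 1 + k = k + n + 1 := by omega
      have h2 : n + 2 + k = k + n + 2 := by omega
      rw [h1, h2]
    exact h1.tsum_eq
  have hesum : ∑' k, e k = t (n + 1) * z := by
    rw [← Summable.sum_add_tsum_nat_add n he_summable, htail]
    have : ∑ k ∈ Finset.range n, e k = 0 :=
      Finset.sum_eq_zero fun k hk => by simp [he, Finset.mem_range.1 hk]
    rw [this, zero_add]
  calc _ ≤ ∑' k, e k := hsum_le
    _ = t (n + 1) * z := hesum
    _ ≤ t (n + 1) := by nlinarith

lemma my_Mavg_diff_le (ht : IsLurothSeq t) {ε ε' : ℕ → Fin 2} {n : ℕ}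
    (hagree : ∀ k, k < n → ε k = ε' k) (h : ∀ k, (ε k : ℕ) ≤ (ε' k : ℕ)) :
    Mavg t ε - Mavg t ε' ≤ t (n + 1) := by
  unfold Mavg
  rw [← MeasureTheory.integral_sub (my_one_sub_F_integrable ht ε)
    (my_one_sub_F_integrable ht ε')]
  have hle : ∀ z ∈ Set.Icc (0:ℝ) 1,
      (1 - F t ε z) - (1 - F t ε' z) ≤ t (n + 1) := by
    intro z hz
    have := my_F_diff_le ht hagree h hz.1 hz.2
    linarith
  calc (∫ z in Set.Icc (0:ℝ) 1, ((1 - F t ε z) - (1 - F t ε' z)))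
      ≤ ∫ _ in Set.Icc (0:ℝ) 1, t (n + 1) := by
        refine MeasureTheory.setIntegral_mono_on
          ((my_one_sub_F_integrable ht ε).sub (my_one_sub_F_integrable ht ε'))
          ((MeasureTheory.integrableOn_const_iff).2 (Or.inr (by simp))) measurableSet_Icc hle
    _ = t (n + 1) := by simp

end MyAux
/-- `𝓜 = ∩_{n=0}^∞ ∪_{ω ∈ {0,1}^n} I_ω` where `I_ω = [M_{ω1̄}, M_{ω0̄}]`. -/
theorem calM_eq_iInter (t : ℕ → ℝ) (ht : IsLurothSeq t) :
    calM t = ⋂ n : ℕ, ⋃ w : Fin n → Fin 2, Iword t w := by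
  apply Set.Subset.antisymm
  · rintro x ⟨ε, rfl⟩
    refine Set.mem_iInter.2 fun n => Set.mem_iUnion.2 ⟨fun i => ε i, ?_⟩
    simp only [Iword, Set.mem_Icc]
    constructor
    · refine my_Mavg_anti ht fun k => ?_
      by_cases hk : k < n
      · simp [cat, hk]
      · simp only [cat, dif_neg hk]
        have := (ε k).isLt
        omega
    · refine my_Mavg_anti ht fun k => ?_
      by_cases hk : k < n
      · simp [cat, hk]
      · simp only [cat, dif_neg hk]
        omega
  · intro x hx
    set C : ℕ → Set (ℕ → Fin 2) := fun n => {ε | x ∈ Iword t (fun i : Fin n => ε i)} with hC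
    have hclosed : ∀ n, IsClosed (C n) := by
      intro n
      have h : C n = (fun (ε : ℕ → Fin 2) (i : Fin n) => ε i) ⁻¹' {w | x ∈ Iword t w} := rfl
      rw [h]
      have hcont : Continuous (fun (ε : ℕ → Fin 2) (i : Fin n) => ε (i : ℕ)) :=
        continuous_pi fun i => continuous_apply _
      exact (isClosed_discrete _).preimage hcont
    have hnonempty : ∀ n, (C n).Nonempty := by
      intro n
      rcases Set.mem_iUnion.1 (Set.mem_iInter.1 hx n) with ⟨w, hw⟩
      refine ⟨cat w (fun _ => 0), ?_⟩
      have hwe : (fun i : Fin n => cat w (fun _ => 0) (i : ℕ)) = w := by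
        funext i
        simp [cat, i.isLt]
      simpa only [hC, Set.mem_setOf_eq, hwe] using hw
    have hanti : ∀ n, C (n + 1) ⊆ C n := by
      intro n ε hε
      simp only [hC, Set.mem_setOf_eq, Iword, Set.mem_Icc] at hε ⊢
      refine ⟨le_trans ?_ hε.1, le_trans hε.2 ?_⟩
      · refine my_Mavg_anti ht fun k => ?_
        by_cases hk : k < n
        · simp [cat, hk, Nat.lt_succ_of_lt hk]
        · by_cases hk' : k < n + 1
          · simp only [cat, dif_neg hk, dif_pos hk']
            have := (ε k).isLt
            omega
          · simp only [cat, dif_neg hk, dif_neg hk']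
            exact le_rfl
      · refine my_Mavg_anti ht fun k => ?_
        by_cases hk : k < n
        · simp [cat, hk, Nat.lt_succ_of_lt hk]
        · by_cases hk' : k < n + 1
          · simp only [cat, dif_neg hk, dif_pos hk']
            omega
          · simp only [cat, dif_neg hk, dif_neg hk']
            exact le_rfl
    obtain ⟨ε, hε⟩ := IsCompact.nonempty_iInter_of_sequence_nonempty_isCompact_isClosed
      C hanti hnonempty (hclosed 0).isCompact hclosed
    have key : ∀ n : ℕ, |x - Mavg t ε| ≤ t (n + 1) := by
      intro n
      have hεC := Set.mem_iInter.1 hε n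
      simp only [hC, Set.mem_setOf_eq, Iword, Set.mem_Icc] at hεC
      have h1 : Mavg t (cat (fun i : Fin n => ε i) (fun _ => 1)) ≤ Mavg t ε := by
        refine my_Mavg_anti ht fun k => ?_
        by_cases hk : k < n
        · simp [cat, hk]
        · simp only [cat, dif_neg hk]
          have := (ε k).isLt
          omega
      have h2 : Mavg t ε ≤ Mavg t (cat (fun i : Fin n => ε i) (fun _ => 0)) := by
        refine my_Mavg_anti ht fun k => ?_
        by_cases hk : k < n
        · simp [cat, hk]
        · simp only [cat, dif_neg hk]
          omega
      have h3 : Mavg t (cat (fun i : Fin n => ε i) (fun _ => 0))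
          - Mavg t (cat (fun i : Fin n => ε i) (fun _ => 1)) ≤ t (n + 1) := by
        refine my_Mavg_diff_le ht (n := n) (fun k hk => ?_) (fun k => ?_)
        · simp [cat, hk]
        · by_cases hk : k < n
          · simp [cat, hk]
          · simp only [cat, dif_neg hk]
            omega
      rw [abs_le]
      exact ⟨by linarith [hεC.1, hεC.2], by linarith [hεC.1, hεC.2]⟩
    have h0 : Tendsto (fun n : ℕ => t (n + 1)) atTop (nhds 0) :=
      ht.tendsto_zero.comp (tendsto_add_atTop_nat 1)
    have habs : |x - Mavg t ε| ≤ 0 := ge_of_tendsto h0 (Filter.Eventually.of_forall key)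
    have hxM : x = Mavg t ε := by
      have := abs_nonneg (x - Mavg t ε)
      have h := abs_eq_zero.1 (le_antisymm habs this)
      linarith
    exact ⟨ε, hxM.symm⟩
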